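/- The integral from 0 to 1 of (ln x)/(1+x^2) dx equals -G, where G = ∑_{k=0}^{∞} (-1)^k/(2k+1)^2 is Catalan's constant; moreover the integral from 1 to ∞ of (ln x)/(1+x^2) dx equals G, and consequently the integral from 0 to ∞ of (ln x)/(1+x^2) dx equals 0. -/

import Mathlib

/-!
Expanding `1 / (1 + x²)` as the alternating geometric series `∑ (-1)ᵏ x²ᵏ` and integrating term
by term against `log x` on `(0, 1)`, with `∫₀¹ x²ᵏ log x dx = -1 / (2k + 1)²`, gives `-G`; the
interchange is justified because these integrals are absolutely summable. The substitution
`x ↦ 1 / x` maps `(0, 1)` onto `(1, ∞)` and turns `log x dx / (1 + x²)` into its negative, which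
yields both the integrability and the value `G` on `(1, ∞)`, hence `0` on `(0, ∞)`.
-/

open Real MeasureTheory Set Filter Topology

theorem integral_pow_mul_log (n : ℕ) :
    ∫ x in (0:ℝ)..1, x ^ n * log x = -1 / ((n : ℝ) + 1) ^ 2 := by
  have hlim : Tendsto (fun x : ℝ => x ^ (n + 1) * log x) (𝓝[>] 0) (𝓝 0) := by
    have := tendsto_log_mul_rpow_nhdsGT_zero (r := ((n + 1 : ℕ) : ℝ)) (by positivity)
    simp only [rpow_natCast] at this
    simpa only [mul_comm] using this
  rw [intervalIntegral.integral_eq_sub_of_hasDerivAt_of_tendsto zero_lt_one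
    (f := fun x => x ^ (n + 1) * log x / (n + 1) - x ^ (n + 1) / (n + 1) ^ 2)
    (fa := 0) (fb := -1 / ((n : ℝ) + 1) ^ 2)]
  · simp
  · intro x hx
    refine ((((hasDerivAt_pow (n + 1) x).mul (hasDerivAt_log hx.1.ne')).div_const _).sub
      ((hasDerivAt_pow (n + 1) x).div_const _)).congr_deriv ?_
    field_simp [hx.1.ne']
    push_cast
    ring
  · exact intervalIntegral.intervalIntegrable_log'.continuousOn_mul (continuousOn_pow n)
  · simpa using (hlim.div_const _).sub
      ((((continuous_pow (n + 1)).tendsto' (0:ℝ) 0 (by simp)).mono_left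
        nhdsWithin_le_nhds).div_const _)
  · have hc : ContinuousAt
        (fun x : ℝ => x ^ (n + 1) * log x / (n + 1) - x ^ (n + 1) / (n + 1) ^ 2) 1 := by
      fun_prop (disch := norm_num)
    simpa [neg_div] using hc.tendsto.mono_left nhdsWithin_le_nhds

theorem hasSum_inv_one_add_sq {x : ℝ} (hx : |x| < 1) :
    HasSum (fun k : ℕ => (-1) ^ k * x ^ (2 * k)) (1 + x ^ 2)⁻¹ := by
  have h : |-x ^ 2| < 1 := by
    simpa [abs_neg, sq_abs] using pow_lt_one₀ (abs_nonneg x) hx two_ne_zero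
  rw [← sub_neg_eq_add]
  convert hasSum_geometric_of_abs_lt_one h using 2 with k
  rw [neg_pow (x ^ 2), pow_mul]

theorem summable_one_div_two_mul_add_one_sq :
    Summable fun k : ℕ => 1 / (2 * (k : ℝ) + 1) ^ 2 := by
  have h := (summable_one_div_nat_pow (p := 2)).mpr one_lt_two
  have hinj : Function.Injective fun k : ℕ => 2 * k + 1 := fun a b hab => by simpa using hab
  simpa [Function.comp_def] using h.comp_injective hinj

theorem integral_log_div_one_add_sq_eq_neg_tsum :
    ∫ x in (0:ℝ)..1, log x / (1 + x ^ 2) = -∑' k : ℕ, (-1 : ℝ) ^ k / (2 * (k : ℝ) + 1) ^ 2 := by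
  have hIoo (g : ℝ → ℝ) : ∫ x in (0:ℝ)..1, g x = ∫ x in Ioo 0 1, g x := by
    rw [intervalIntegral.integral_of_le zero_le_one, integral_Ioc_eq_integral_Ioo]
  have hint (n : ℕ) : IntegrableOn (fun x : ℝ => x ^ n * log x) (Ioo 0 1) :=
    (intervalIntegrable_iff_integrableOn_Ioo_of_le zero_le_one).1
      (intervalIntegral.intervalIntegrable_log'.continuousOn_mul (continuousOn_pow n))
  have hnorm (k : ℕ) : ∫ x in Ioo 0 1, ‖(-1 : ℝ) ^ k * (x ^ (2 * k) * log x)‖ =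
      1 / (2 * (k : ℝ) + 1) ^ 2 := by
    rw [setIntegral_congr_fun (g := fun x => -(x ^ (2 * k) * log x)) measurableSet_Ioo
      fun x hx => ?_, integral_neg, ← hIoo, integral_pow_mul_log]
    · push_cast
      ring
    · rw [norm_mul, norm_pow, norm_neg, norm_one, one_pow, one_mul, norm_mul,
        Real.norm_of_nonneg (pow_nonneg hx.1.le _),
        Real.norm_of_nonpos (log_nonpos hx.1.le hx.2.le)]
      ring
  have hseries : ∀ x ∈ Ioo (0:ℝ) 1,
      log x / (1 + x ^ 2) = ∑' k : ℕ, (-1) ^ k * (x ^ (2 * k) * log x) := fun x hx => by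
    have hx' : |x| < 1 := abs_lt.2 ⟨by linarith [hx.1], hx.2⟩
    simpa only [mul_assoc, inv_mul_eq_div] using
      ((hasSum_inv_one_add_sq hx').mul_right (log x)).tsum_eq.symm
  rw [hIoo, setIntegral_congr_fun measurableSet_Ioo hseries,
    ← integral_tsum_of_summable_integral_norm (fun k => (hint (2 * k)).const_mul _)
      (by simpa only [hnorm] using summable_one_div_two_mul_add_one_sq), ← tsum_neg]
  congr 1 with k
  rw [integral_const_mul, ← hIoo, integral_pow_mul_log]
  push_cast
  ring

section InvSubstitution

variable {E : Type*} [NormedAddCommGroup E] [NormedSpace ℝ E]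

theorem integrableOn_Ioi_one_iff_comp_inv (g : ℝ → E) :
    IntegrableOn g (Ioi 1) ↔ IntegrableOn (fun x => (x ^ 2)⁻¹ • g x⁻¹) (Ioo 0 1) := by
  have := integrableOn_image_iff_integrableOn_abs_deriv_smul (measurableSet_Ioo (a := 0) (b := 1))
    (fun x hx => (hasDerivAt_inv hx.1.ne').hasDerivWithinAt) inv_injective.injOn g
  simpa [image_inv_eq_inv, inv_Ioo_0_left] using this

theorem integral_Ioi_one_eq_integral_comp_inv (g : ℝ → E) :
    ∫ x in Ioi 1, g x = ∫ x in Ioo 0 1, (x ^ 2)⁻¹ • g x⁻¹ := by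
  have := integral_image_eq_integral_abs_deriv_smul (measurableSet_Ioo (a := 0) (b := 1))
    (fun x hx => (hasDerivAt_inv hx.1.ne').hasDerivWithinAt) inv_injective.injOn g
  simpa [image_inv_eq_inv, inv_Ioo_0_left] using this

end InvSubstitution

-- At `x = 0` both sides vanish, since `0⁻¹ = 0` and `log 0 = 0`.
theorem inv_sq_mul_log_inv_div_one_add_inv_sq (x : ℝ) :
    (x ^ 2)⁻¹ * (log x⁻¹ / (1 + x⁻¹ ^ 2)) = -(log x / (1 + x ^ 2)) := by
  rcases eq_or_ne x 0 with rfl | hx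
  · simp
  · rw [log_inv]
    field_simp
    ring

/-- GR 4.231.12: `∫_0^1 ln x/(1+x²) dx = -G`, `∫_1^∞ ln x/(1+x²) dx = G`,
and `∫_0^∞ ln x/(1+x²) dx = 0`, where `G` is Catalan's constant. -/
theorem integral_log_div_one_add_sq :
    (∫ x in (0:ℝ)..1, Real.log x / (1 + x ^ 2) =
      -∑' k : ℕ, (-1 : ℝ) ^ k / (2 * (k : ℝ) + 1) ^ 2) ∧
    (∫ x in Set.Ioi (1:ℝ), Real.log x / (1 + x ^ 2) =
      ∑' k : ℕ, (-1 : ℝ) ^ k / (2 * (k : ℝ) + 1) ^ 2) ∧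
    (∫ x in Set.Ioi (0:ℝ), Real.log x / (1 + x ^ 2) = 0) := by
  set f : ℝ → ℝ := fun x => log x / (1 + x ^ 2)
  have h01 := integral_log_div_one_add_sq_eq_neg_tsum
  have hIoo : ∫ x in Ioo 0 1, f x = ∫ x in (0:ℝ)..1, f x := by
    rw [intervalIntegral.integral_of_le zero_le_one, integral_Ioc_eq_integral_Ioo]
  have hint01 : IntegrableOn f (Ioc 0 1) :=
    (intervalIntegrable_iff_integrableOn_Ioc_of_le zero_le_one).1 <| by
      simpa only [f, div_eq_mul_inv] using
        intervalIntegral.intervalIntegrable_log'.mul_continuousOn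
          (g := fun x : ℝ => (1 + x ^ 2)⁻¹) (by fun_prop (disch := intros; positivity))
  have hsymm : (fun x => (x ^ 2)⁻¹ • f x⁻¹) = fun x => -f x :=
    funext inv_sq_mul_log_inv_div_one_add_inv_sq
  have hint1 : IntegrableOn f (Ioi 1) := by
    rw [integrableOn_Ioi_one_iff_comp_inv, hsymm]
    exact (hint01.mono_set Ioo_subset_Ioc_self).neg
  have h1 : ∫ x in Ioi 1, f x = -∫ x in (0:ℝ)..1, f x := by
    rw [integral_Ioi_one_eq_integral_comp_inv, hsymm, integral_neg, hIoo]
  refine ⟨h01, by rw [h1, h01, neg_neg], ?_⟩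
  rw [← Ioc_union_Ioi_eq_Ioi zero_le_one,
    setIntegral_union (Ioc_disjoint_Ioi le_rfl) measurableSet_Ioi hint01 hint1,
    integral_Ioc_eq_integral_Ioo, hIoo, h1, add_neg_cancel]
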